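/- Let Y be a nondegenerate random variable and X a random vector with ν(Y,X) = 0, where ν(Y,X) = ∫ Var(E[1{Y>t}|X])/Var(1{Y>t}) dμ̃(t). Then Y and X are independent. -/

import Mathlib

open MeasureTheory ProbabilityTheory Classical

noncomputable section

/-- The indicator of the event `{Y > t}`. -/
def indGT {Ω : Type*} (Y : Ω → ℝ) (t : ℝ) : Ω → ℝ := fun ω => if Y ω > t then 1 else 0

/-- The (topological) support of a measure on `ℝ`: points all of whose neighbourhoods
have positive measure. -/
def msupport (ρ : Measure ℝ) : Set ℝ :=
  {x | ∀ ε > (0 : ℝ), ρ (Set.Ioo (x - ε) (x + ε)) ≠ 0}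

/-- `S̃`: the support with its maximum removed, if the support attains a maximum. -/
def tildeSet (ρ : Measure ℝ) : Set ℝ :=
  if h : ∃ m, IsGreatest (msupport ρ) m then msupport ρ \ {h.choose} else msupport ρ

/-- `μ̃`: the law `ρ` restricted to `S̃` and renormalized. -/
def tildeMeasure (ρ : Measure ℝ) : Measure ℝ :=
  (ρ (tildeSet ρ))⁻¹ • ρ.restrict (tildeSet ρ)

/-- The dependence measure
`ν(Y, X) = ∫ Var(E[1{Y > t} | X]) / Var(1{Y > t}) dμ̃(t)`,
where the integrand is defined to be `1` whenever `Var(1{Y > t}) = 0`. -/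
def nu {Ω : Type*} [MeasurableSpace Ω] (μ : Measure Ω) (Y : Ω → ℝ)
    {E : Type*} [MeasurableSpace E] (X : Ω → E) : ℝ :=
  ∫ t, (if variance (indGT Y t) μ = 0 then 1
        else variance (μ[indGT Y t | MeasurableSpace.comap X inferInstance]) μ
              / variance (indGT Y t) μ)
    ∂ tildeMeasure (Measure.map Y μ)

end
open Set Filter

lemma msupport_eq_support (ρ : Measure ℝ) : msupport ρ = ρ.support := by
  ext x
  rw [Metric.nhds_basis_ball.mem_measureSupport]
  simp [msupport, Real.ball_eq_Ioo, pos_iff_ne_zero]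

lemma ae_mem_msupport (ρ : Measure ℝ) : ∀ᵐ t ∂ρ, t ∈ msupport ρ := by
  rw [msupport_eq_support]
  exact Measure.support_mem_ae

lemma measure_Ioi_eq_zero_of_isGreatest {ρ : Measure ℝ} {m : ℝ}
    (hm : IsGreatest (msupport ρ) m) : ρ (Ioi m) = 0 := by
  rw [msupport_eq_support] at hm
  exact measure_mono_null (fun t ht hts => (hm.2 hts).not_gt ht) Measure.measure_compl_support

lemma measurableSet_tildeSet (ρ : Measure ℝ) : MeasurableSet (tildeSet ρ) := by
  have hS : MeasurableSet (msupport ρ) := by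
    rw [msupport_eq_support]; exact Measure.isClosed_support.measurableSet
  unfold tildeSet
  split_ifs
  exacts [hS.diff (measurableSet_singleton _), hS]

lemma ae_of_ae_restrict_tildeSet {ρ : Measure ℝ} {P : ℝ → Prop}
    (h : ∀ᵐ t ∂ρ.restrict (tildeSet ρ), P t) (hmax : ∀ m, IsGreatest (msupport ρ) m → P m) :
    ∀ᵐ t ∂ρ, P t := by
  rw [ae_restrict_iff' (measurableSet_tildeSet ρ)] at h
  filter_upwards [h, ae_mem_msupport ρ] with t ht hts
  unfold tildeSet at ht
  split_ifs at ht with hmax'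
  · by_cases htm : t = hmax'.choose
    · exact htm ▸ hmax _ hmax'.choose_spec
    · exact ht ⟨hts, htm⟩
  · exact ht hts

lemma measure_tildeSet_ne_zero {ρ : Measure ℝ} [NeZero ρ] (h : ¬ ∃ c, ∀ᵐ t ∂ρ, t = c) :
    ρ (tildeSet ρ) ≠ 0 := by
  intro h0
  have hmax : ∀ᵐ t ∂ρ, IsGreatest (msupport ρ) t :=
    ae_of_ae_restrict_tildeSet (by simp [Measure.restrict_eq_zero.2 h0]) fun _ hm => hm
  obtain ⟨m, hm⟩ := hmax.exists
  exact h ⟨m, hmax.mono fun t ht => ht.unique hm⟩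

lemma ae_restrict_eq_zero_of_integral_tildeMeasure_eq_zero {ρ : Measure ℝ} [IsFiniteMeasure ρ]
    (hρ : ρ (tildeSet ρ) ≠ 0) {g : ℝ → ℝ} (hg : Integrable g (ρ.restrict (tildeSet ρ)))
    (hg0 : 0 ≤ g) (h : ∫ t, g t ∂tildeMeasure ρ = 0) :
    g =ᵐ[ρ.restrict (tildeSet ρ)] 0 := by
  rw [tildeMeasure, integral_smul_measure, smul_eq_mul, ENNReal.toReal_inv, mul_eq_zero,
    inv_eq_zero, ENNReal.toReal_eq_zero_iff] at h
  exact (integral_eq_zero_iff_of_nonneg hg0 hg).1 <| h.resolve_left (by simp [hρ])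

theorem MeasureTheory.Measure.ext_of_ae_Iic {κ₁ κ₂ ρ : Measure ℝ} [IsFiniteMeasure κ₁]
    (h₁ : κ₁ ≪ ρ) (h₂ : κ₂ ≪ ρ) (h : ∀ᵐ t ∂ρ, κ₁ (Iic t) = κ₂ (Iic t)) : κ₁ = κ₂ := by
  set D := {t | κ₁ (Iic t) = κ₂ (Iic t)}
  have hD : ρ Dᶜ = 0 := h
  have hnull : ∀ {s}, s ⊆ Dᶜ → κ₁ s = κ₂ s := fun hs =>
    (h₁ (measure_mono_null hs hD)).trans (h₂ (measure_mono_null hs hD)).symm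
  refine Measure.ext_of_Iic κ₁ κ₂ fun t => ?_
  by_cases hne : (D ∩ Iic t).Nonempty
  swap
  · exact hnull fun x hxt hxD => hne ⟨x, hxD, hxt⟩
  have hbdd : BddAbove (D ∩ Iic t) := ⟨t, fun _ hx => hx.2⟩
  set s := sSup (D ∩ Iic t)
  have hgap : ∀ {κ : Measure ℝ}, κ ≪ ρ → κ (Iic t) = κ (Iic s) := fun hκ => by
    rw [← Iic_union_Ioc_eq_Iic (csSup_le hne fun _ hx => hx.2)]
    exact measure_congr <| union_ae_eq_left_of_ae_eq_empty <| ae_eq_empty.2 <| hκ <|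
      measure_mono_null (fun x hx hxD => (le_csSup hbdd ⟨hxD, hx.2⟩).not_gt hx.1) hD
  rw [hgap h₁, hgap h₂]
  by_cases hs : s ∈ D
  · exact hs
  obtain ⟨u, hu_mono, hu_lim, hu_mem⟩ := exists_seq_tendsto_sSup hne hbdd
  have hu_lt : ∀ n, u n < s := fun n =>
    (le_csSup hbdd (hu_mem n)).lt_of_ne fun h => hs (h ▸ (hu_mem n).1 :)
  have hlim : ∀ {κ : Measure ℝ}, κ ≪ ρ → κ (Iic s) = ⨆ n, κ (Iic (u n)) := fun hκ => by
    rw [← Iio_union_right, measure_congr <| union_ae_eq_left_of_ae_eq_empty <| ae_eq_empty.2 <|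
        hκ (measure_mono_null (singleton_subset_iff.2 hs) hD),
      ← iUnion_Iic_eq_Iio_of_lt_of_tendsto hu_lt hu_lim,
      Monotone.measure_iUnion fun _ _ hmn => Iic_subset_Iic.2 (hu_mono hmn)]
  rw [hlim h₁, hlim h₂]
  exact iSup_congr fun n => (hu_mem n).1

lemma indepFun_of_ae_measure_inter_preimage_Ioi {Ω E : Type*} {mΩ : MeasurableSpace Ω}
    [MeasurableSpace E] {μ : Measure Ω} [IsProbabilityMeasure μ] {Y : Ω → ℝ} {X : Ω → E}
    (hY : Measurable Y) (h : ∀ᵐ t ∂μ.map Y, ∀ B, MeasurableSet B →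
      μ (Y ⁻¹' Ioi t ∩ X ⁻¹' B) = μ (Y ⁻¹' Ioi t) * μ (X ⁻¹' B)) :
    IndepFun Y X μ := by
  rw [indepFun_iff_measure_inter_preimage_eq_mul]
  intro s B hs hB
  have hlaw : (μ.restrict (X ⁻¹' B)).map Y = μ (X ⁻¹' B) • μ.map Y := by
    refine Measure.ext_of_ae_Iic
      ((Measure.absolutelyContinuous_of_le Measure.restrict_le_self).map hY)
      (Measure.AbsolutelyContinuous.rfl.smul_left _) ?_
    filter_upwards [h] with t ht
    rw [← compl_Ioi, measure_compl measurableSet_Ioi (measure_ne_top _ _),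
      measure_compl measurableSet_Ioi (by simp [ENNReal.mul_eq_top])]
    simp [Measure.map_apply hY, Measure.restrict_apply, hY measurableSet_Ioi, ht B hB, mul_comm]
  simpa [Measure.map_apply hY hs, Measure.restrict_apply (hY hs), mul_comm] using
    congrArg (· s) hlaw

-- the integrand of `nu`, with `f = indGT Y t` and `m` the σ-algebra generated by `X`
noncomputable def condVarianceRatio {Ω : Type*} [MeasurableSpace Ω] (μ : Measure Ω)
    (m : MeasurableSpace Ω) (f : Ω → ℝ) : ℝ :=
  if Var[f; μ] = 0 then 1 else Var[μ[f | m]; μ] / Var[f; μ]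

section ConditionalVariance

variable {Ω : Type*} {m mΩ : MeasurableSpace Ω} {μ : Measure Ω}

lemma variance_condExp_le [IsProbabilityMeasure μ] (hm : m ≤ mΩ) {f : Ω → ℝ}
    (hf : MemLp f 2 μ) : Var[μ[f | m]; μ] ≤ Var[f; μ] := by
  rw [← integral_condVar_add_variance_condExp hm hf, le_add_iff_nonneg_left]
  exact integral_nonneg_of_ae (condExp_nonneg (ae_of_all _ fun _ => sq_nonneg _))

lemma measure_inter_eq_mul_of_variance_condExp_indicator_eq_zero [IsFiniteMeasure μ]
    (hm : m ≤ mΩ) {A : Set Ω} (hA : MeasurableSet A) (h : Var[μ[A.indicator 1 | m]; μ] = 0)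
    {B : Set Ω} (hB : MeasurableSet[m] B) : μ (A ∩ B) = μ A * μ B := by
  have hA2 : MemLp (A.indicator 1) 2 μ := memLp_indicator_const (μ := μ) 2 hA (1 : ℝ) (by simp)
  have hW : MemLp (μ[A.indicator 1 | m]) 2 μ := hA2.condExp one_le_two
  have hconst := ae_eq_integral_of_variance_eq_zero hW h
  rw [integral_condExp hm, integral_indicator_one hA] at hconst
  have hreal : μ.real (A ∩ B) = μ.real A * μ.real B := calc
    μ.real (A ∩ B) = ∫ ω in B, A.indicator 1 ω ∂μ := by
      rw [setIntegral_indicator hA, inter_comm]; simp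
    _ = ∫ ω in B, μ[A.indicator 1 | m] ω ∂μ :=
      (setIntegral_condExp hm (hA2.integrable one_le_two) hB).symm
    _ = ∫ _ in B, μ.real A ∂μ :=
      setIntegral_congr_ae (hm B hB) (hconst.mono fun _ hω _ => hω)
    _ = μ.real A * μ.real B := by simp [mul_comm]
  rwa [← ENNReal.toReal_eq_toReal_iff' (measure_ne_top _ _) (by finiteness), ENNReal.toReal_mul]

lemma measurable_variance_of_antitone [IsProbabilityMeasure μ] {f : ℝ → Ω → ℝ}
    (hf : ∀ t, MemLp (f t) 2 μ) (h0 : ∀ t, 0 ≤ᵐ[μ] f t) (hanti : ∀ s t, s ≤ t → f t ≤ᵐ[μ] f s) :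
    Measurable fun t => Var[f t; μ] := by
  have hmean : Antitone fun t => μ[f t] := fun s t hst =>
    integral_mono_ae ((hf t).integrable one_le_two) ((hf s).integrable one_le_two) (hanti s t hst)
  have hsq : Antitone fun t => μ[f t ^ 2] := fun s t hst =>
    integral_mono_ae (hf t).integrable_sq (hf s).integrable_sq <| by
      filter_upwards [hanti s t hst, h0 t] with ω hts ht
      exact pow_le_pow_left₀ ht hts 2
  simp_rw [variance_eq_sub (hf _)]
  exact hsq.measurable.sub (hmean.measurable.pow_const 2)

lemma condVarianceRatio_nonneg (f : Ω → ℝ) : 0 ≤ condVarianceRatio μ m f := by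
  unfold condVarianceRatio
  split_ifs
  exacts [zero_le_one, div_nonneg (variance_nonneg _ _) (variance_nonneg _ _)]

lemma condVarianceRatio_le_one [IsProbabilityMeasure μ] (hm : m ≤ mΩ) {f : Ω → ℝ}
    (hf : MemLp f 2 μ) : condVarianceRatio μ m f ≤ 1 := by
  unfold condVarianceRatio
  split_ifs with h
  exacts [le_rfl, div_le_one_of_le₀ (variance_condExp_le hm hf) (variance_nonneg _ _)]

lemma variance_condExp_eq_zero_of_condVarianceRatio_eq_zero {f : Ω → ℝ}
    (h : condVarianceRatio μ m f = 0) : Var[μ[f | m]; μ] = 0 := by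
  unfold condVarianceRatio at h
  split_ifs at h with hf
  exacts [absurd h one_ne_zero, (div_eq_zero_iff.1 h).resolve_right hf]

end ConditionalVariance

section Threshold

variable {Ω : Type*} {m mΩ : MeasurableSpace Ω} {μ : Measure Ω} {Y : Ω → ℝ}

lemma indGT_eq_indicator (Y : Ω → ℝ) (t : ℝ) : indGT Y t = (Y ⁻¹' Ioi t).indicator 1 := by
  ext ω
  simp [indGT, indicator]

lemma memLp_indGT [IsFiniteMeasure μ] (hY : Measurable Y) (t : ℝ) : MemLp (indGT Y t) 2 μ := by
  rw [indGT_eq_indicator]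
  exact memLp_indicator_const (μ := μ) 2 (hY measurableSet_Ioi) (1 : ℝ) (by simp)

lemma indGT_nonneg (Y : Ω → ℝ) (t : ℝ) : 0 ≤ indGT Y t := by
  rw [indGT_eq_indicator]
  exact indicator_nonneg (fun _ _ => zero_le_one)

lemma antitone_indGT (Y : Ω → ℝ) : Antitone (indGT Y) := fun s t hst => by
  simp only [indGT_eq_indicator]
  exact indicator_le_indicator_of_subset (preimage_mono (Ioi_subset_Ioi hst)) fun _ => zero_le_one

lemma measurable_condVarianceRatio_indGT [IsProbabilityMeasure μ] (hY : Measurable Y) :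
    Measurable fun t => condVarianceRatio μ m (indGT Y t) := by
  have hv : Measurable fun t => Var[indGT Y t; μ] :=
    measurable_variance_of_antitone (memLp_indGT hY) (fun t => ae_of_all _ (indGT_nonneg Y t))
      fun s t hst => ae_of_all _ (antitone_indGT Y hst)
  have hw : Measurable fun t => Var[μ[indGT Y t | m]; μ] :=
    measurable_variance_of_antitone (fun t => (memLp_indGT hY t).condExp one_le_two)
      (fun t => condExp_nonneg (ae_of_all _ (indGT_nonneg Y t)))
      fun s t hst => condExp_mono ((memLp_indGT hY t).integrable one_le_two)
        ((memLp_indGT hY s).integrable one_le_two) (ae_of_all _ (antitone_indGT Y hst))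
  exact Measurable.ite (measurableSet_eq_fun hv measurable_const) measurable_const (hw.div hv)

end Threshold

/-- If `Y` is nondegenerate and `ν(Y,X) = 0`, then `Y` and `X` are independent. -/
theorem stmt_5 {Ω : Type*} [MeasurableSpace Ω] (μ : Measure Ω) [IsProbabilityMeasure μ]
    {p : ℕ} (Y : Ω → ℝ) (X : Ω → EuclideanSpace ℝ (Fin p))
    (hY : Measurable Y) (hX : Measurable X)
    (hconst : ¬ ∃ c : ℝ, ∀ᵐ ω ∂μ, Y ω = c)
    (hnu : nu μ Y X = 0) :
    IndepFun Y X μ := by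
  set ρ := μ.map Y
  have : IsProbabilityMeasure ρ := Measure.isProbabilityMeasure_map hY.aemeasurable
  have hρ : ρ (tildeSet ρ) ≠ 0 := measure_tildeSet_ne_zero fun ⟨c, hc⟩ =>
    hconst ⟨c, (ae_map_iff hY.aemeasurable (measurableSet_singleton c)).1 hc⟩
  have hratio : (fun t => condVarianceRatio μ (MeasurableSpace.comap X inferInstance)
      (indGT Y t)) =ᵐ[ρ.restrict (tildeSet ρ)] 0 :=
    ae_restrict_eq_zero_of_integral_tildeMeasure_eq_zero hρ
      (Integrable.of_bound (measurable_condVarianceRatio_indGT hY).aestronglyMeasurable 1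
        (ae_of_all _ fun t => by
          rw [Real.norm_of_nonneg (condVarianceRatio_nonneg _)]
          exact condVarianceRatio_le_one hX.comap_le (memLp_indGT hY t)))
      (fun t => condVarianceRatio_nonneg _) hnu
  refine indepFun_of_ae_measure_inter_preimage_Ioi hY (ae_of_ae_restrict_tildeSet ?_ ?_)
  · filter_upwards [hratio] with t ht B hB
    rw [indGT_eq_indicator] at ht
    exact measure_inter_eq_mul_of_variance_condExp_indicator_eq_zero hX.comap_le
      (hY measurableSet_Ioi) (variance_condExp_eq_zero_of_condVarianceRatio_eq_zero ht)
      ⟨B, hB, rfl⟩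
  · intro m hm B _
    have h0 : μ (Y ⁻¹' Ioi m) = 0 := by
      rw [← Measure.map_apply hY measurableSet_Ioi]
      exact measure_Ioi_eq_zero_of_isGreatest hm
    rw [h0, zero_mul, measure_mono_null inter_subset_left h0]
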